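/- Let (J, N, ♯, T) be a hermitian cubic norm structure over K/F and let A(K) := K × J with unit (1,0), involution (s,b)‾ := (σ(s), b), and multiplication (s,b)·(t,c) := (s·t + T(b, c), s•c + σ(t)•b + b × c). Let u ∈ K with u ≠ 0 and σ(u) = −u, set s₀ := (u, 0) and μ := u² ∈ F, and define, for x, y ∈ A(K), U_x(y) := 2(x·ȳ)·x − (x·x̄)·y and ψ(x, y) := x·ȳ − y·x̄. Then for all x = (s, b) ∈ A(K): ψ(x, U_x(s₀·x)) · s₀ = 6·μ·ν(s,b)·(1,0), where ν(s,b) := (s·σ(s) − T(b, b))² − 4·T(b♯, b♯) + 4·(s·N(b) + σ(s·N(b))). In other words, the norm of A(K) is ν(s,b) = (Nr(s) − T(b,b))² − 4·T(b♯, b♯) + 4·Tr(s·N(b)), with Nr and Tr the norm and trace of K/F. -/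

import Mathlib

/-- A hermitian (non-unital) cubic norm structure over `K/F`, with respect to
the conjugation `σ` of `K`. -/
structure HermCubicNormStructure (K : Type*) [CommRing K] (σ : K → K)
    (J : Type*) [AddCommGroup J] [Module K J] where
  N : J → K
  sharp : J → J
  T : J → J → K
  N_ne_zero : N ≠ 0
  T_add_left : ∀ a b c : J, T (a + b) c = T a c + T b c
  T_add_right : ∀ a b c : J, T a (b + c) = T a b + T a c
  T_smul : ∀ (s t : K) (a b : J), T (s • a) (t • b) = s * σ t * T a b
  T_conj : ∀ a b : J, σ (T a b) = T b a
  sharp_smul : ∀ (t : K) (a : J), sharp (t • a) = (σ t) ^ 2 • sharp a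
  N_smul : ∀ (t : K) (a : J), N (t • a) = t ^ 3 * N a
  N_add : ∀ a b : J, N (a + b) = N a + T b (sharp a) + T a (sharp b) + N b
  sharp_sharp : ∀ a : J, sharp (sharp a) = N a • a

namespace HermCubicNormStructure

variable {K : Type*} [CommRing K] {σ : K → K}
  {J : Type*} [AddCommGroup J] [Module K J]

/-- The (σ-semilinear) linearization `a × b` of the adjoint map. -/
def cross (H : HermCubicNormStructure K σ J) (a b : J) : J :=
  H.sharp (a + b) - H.sharp a - H.sharp b

/-- The `U`-operator `U_a(b) = T(a,b)•a − a♯ × b`. -/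
def U (H : HermCubicNormStructure K σ J) (a b : J) : J :=
  H.T a b • a - H.cross (H.sharp a) b

end HermCubicNormStructure

section HAAlgebra

variable {K : Type*} [CommRing K] {σ : K → K}
  {J : Type*} [AddCommGroup J] [Module K J]

/-- The multiplication of the algebra `A(K) = K ⊕ J`:
`(s,b)(t,c) = (st + T(b,c), s•c + σ(t)•b + b × c)`. -/
def HAmul (H : HermCubicNormStructure K σ J) (x y : K × J) : K × J :=
  (x.1 * y.1 + H.T x.2 y.2, x.1 • y.2 + σ y.1 • x.2 + H.cross x.2 y.2)

end HAAlgebra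

/-- The involution of `A(K) = K ⊕ J`: `(s,b)‾ = (σ(s), b)`. -/
def Abar {K J : Type*} (σ : K → K) (x : K × J) : K × J := (σ x.1, x.2)

/-- The operator `V_{x,y}(z) = (x·ȳ)·z + (z·ȳ)·x − (z·x̄)·y`. -/
def AV {A : Type*} [AddCommGroup A] (mul : A → A → A) (bar : A → A)
    (x y z : A) : A :=
  mul (mul x (bar y)) z + mul (mul z (bar y)) x - mul (mul z (bar x)) y

/-- `A`, equipped with the bilinear multiplication `mul`, unit `one` and
`F`-linear involution `bar`, is a structurable `F`-algebra: `bar` is an additive,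
`F`-linear involution with `(xy)‾ = ȳ x̄`, `mul` is `F`-bilinear with unit `one`,
and the structurable identity `[V_{x,y}, V_{z,w}] = V_{V_{x,y}z, w} − V_{z, V_{y,x}w}`
holds (stated pointwise). -/
def IsStructurable (F : Type*) [Field F] {A : Type*} [AddCommGroup A] [Module F A]
    (mul : A → A → A) (bar : A → A) (one : A) : Prop :=
  (∀ x y, bar (x + y) = bar x + bar y) ∧
  (∀ (c : F) (x), bar (c • x) = c • bar x) ∧
  (∀ x, bar (bar x) = x) ∧
  (∀ x y, bar (mul x y) = mul (bar y) (bar x)) ∧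
  (∀ x y z, mul (x + y) z = mul x z + mul y z) ∧
  (∀ x y z, mul x (y + z) = mul x y + mul x z) ∧
  (∀ (c : F) (x y), mul (c • x) y = c • mul x y) ∧
  (∀ (c : F) (x y), mul x (c • y) = c • mul x y) ∧
  (∀ x, mul one x = x ∧ mul x one = x) ∧
  (∀ x y z w v,
    AV mul bar x y (AV mul bar z w v) - AV mul bar z w (AV mul bar x y v) =
    AV mul bar (AV mul bar x y z) w v - AV mul bar z (AV mul bar y x w) v)

/-- The skew elements of `(A, bar)` form a one-dimensional `F`-subspace. -/
def SkewDimOne (F : Type*) [Field F] {A : Type*} [AddCommGroup A] [Module F A]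
    (bar : A → A) : Prop :=
  ∃ s₀ : A, bar s₀ = -s₀ ∧ s₀ ≠ 0 ∧ ∀ x, bar x = -x → ∃ c : F, x = c • s₀

/-- `ψ(x,y) = x·ȳ − y·x̄`. -/
def Apsi {A : Type*} [AddCommGroup A] (mul : A → A → A) (bar : A → A)
    (x y : A) : A :=
  mul x (bar y) - mul y (bar x)

/-- `U_x(y) = 2(x·ȳ)·x − (x·x̄)·y`. -/
def AUop {A : Type*} [AddCommGroup A] (mul : A → A → A) (bar : A → A)
    (x y : A) : A :=
  2 • mul (mul x (bar y)) x - mul (mul x (bar x)) y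

/-!
Since `(x ȳ)‾ = y x̄`, the element `ψ(x, y) = x ȳ − (x ȳ)‾` is `(τ − σ τ, 0)` with `τ` the
`K`-component of `x ȳ`; so only the `K`-component of `x · U_x(s₀x)‾` is needed. It involves `J`
only through values of `T`, and these reduce to `T(b,b)`, `T(b♯,b♯)`, `N(b)` and their conjugates
by `T(a, a♯) = 3 N(a)` and the rotation rule `T(d, a × c) = T(a, c × d)`; the latter comes from
comparing the two expansions of `N(a + c + d)` given by `N_add`.
-/

namespace HermCubicNormStructure

section General

variable {K : Type*} [CommRing K] {σ : K → K} {J : Type*} [AddCommGroup J] [Module K J]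
  (H : HermCubicNormStructure K σ J)

theorem T_zero_left (c : J) : H.T 0 c = 0 := by
  simpa using H.T_add_left 0 0 c

theorem T_sub_left (a a' c : J) : H.T (a - a') c = H.T a c - H.T a' c := by
  rw [eq_sub_iff_add_eq, ← H.T_add_left, sub_add_cancel]

theorem T_sub_right (c a a' : J) : H.T c (a - a') = H.T c a - H.T c a' := by
  rw [eq_sub_iff_add_eq, ← H.T_add_right, sub_add_cancel]

theorem T_smul_right (t : K) (a c : J) : H.T a (t • c) = σ t * H.T a c := by
  simpa using H.T_smul 1 t a c

theorem cross_comm (a c : J) : H.cross a c = H.cross c a := by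
  rw [cross, cross, add_comm, sub_sub, sub_sub, add_comm (H.sharp a)]

theorem sharp_add (a c : J) : H.sharp (a + c) = H.sharp a + H.sharp c + H.cross a c := by
  rw [cross]
  abel

theorem T_cross_rotate (a c d : J) : H.T d (H.cross a c) = H.T a (H.cross c d) := by
  have hac := H.N_add (a + c) d
  have hcd := H.N_add a (c + d)
  rw [sharp_add, H.N_add a c] at hac
  rw [sharp_add, H.N_add c d, ← add_assoc] at hcd
  simp only [H.T_add_left, H.T_add_right] at hac hcd
  linear_combination hcd - hac

theorem T_self_sharp (h2 : IsUnit (2 : K)) (a : J) : H.T a (H.sharp a) = 3 * H.N a := by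
  have h := H.N_add a a
  rw [← two_smul K a, H.N_smul] at h
  exact h2.mul_left_cancel (by linear_combination -h)

end General

section RingHom

variable {K : Type*} [CommRing K] {R : Type*} [FunLike R K K] [RingHomClass R K K] {σ : R}
  {J : Type*} [AddCommGroup J] [Module K J] (H : HermCubicNormStructure K σ J)

theorem T_smul_left (t : K) (a c : J) : H.T (t • a) c = t * H.T a c := by
  simpa using H.T_smul t 1 a c

theorem T_sharp_self (h2 : IsUnit (2 : K)) (a : J) : H.T (H.sharp a) a = 3 * σ (H.N a) := by
  rw [← H.T_conj, H.T_self_sharp h2, map_mul, map_ofNat]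

theorem sharp_zero : H.sharp (0 : J) = 0 := by
  simpa using H.sharp_smul 0 0

theorem cross_zero_left (a : J) : H.cross 0 a = 0 := by
  simp [cross, sharp_zero]

theorem cross_smul_self (t : K) (a : J) : H.cross a (t • a) = (2 * σ t) • H.sharp a := by
  rw [cross, show a + t • a = (1 + t) • a by module, H.sharp_smul, H.sharp_smul, map_add, map_one]
  module

theorem cross_self (a : J) : H.cross a a = (2 : K) • H.sharp a := by
  simpa using H.cross_smul_self 1 a

end RingHom

end HermCubicNormStructure

open HermCubicNormStructure

section HAAlgebra

variable {K : Type*} [CommRing K] {R : Type*} [FunLike R K K] [RingHomClass R K K] {σ : R}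
  {J : Type*} [AddCommGroup J] [Module K J] (H : HermCubicNormStructure K σ J)

theorem HAmul_mk_zero_left (t s : K) (b : J) : HAmul H (t, 0) (s, b) = (t * s, t • b) := by
  simp [HAmul, T_zero_left, cross_zero_left]

theorem Apsi_HAmul_Abar (hσ : Function.Involutive σ) (s t : K) (b c : J) :
    Apsi (HAmul H) (Abar σ) (s, b) (t, c) =
      (s * σ t + H.T b c - σ (s * σ t + H.T b c), 0) := by
  simp only [Apsi, Abar, HAmul, Prod.mk_sub_mk, map_add, map_mul, hσ _, H.T_conj,
    H.cross_comm c b]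
  congr 1
  · ring
  · abel

theorem HAmul_Abar_self (hσ : Function.Involutive σ) (s : K) (b : J) :
    HAmul H (s, b) (Abar σ (s, b)) = (s * σ s + H.T b b, (2 * s) • b + (2 : K) • H.sharp b) := by
  simp only [HAmul, Abar, hσ s, H.cross_self, Prod.mk.injEq, true_and]
  module

theorem HAmul_Abar_smul (hσ : Function.Involutive σ) {u : K} (hu : σ u = -u) (s : K) (b : J) :
    HAmul H (s, b) (Abar σ (u * s, u • b)) =
      (-(u * (s * σ s + H.T b b)), (2 * (u * s)) • b - (2 * u) • H.sharp b) := by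
  simp only [HAmul, Abar, map_mul, hu, T_smul_right, cross_smul_self, map_neg, hσ s,
    Prod.mk.injEq]
  constructor
  · ring
  · module

theorem AUop_smul_fst (hσ : Function.Involutive σ) {u : K} (hu : σ u = -u) (s : K) (b : J) :
    (AUop (HAmul H) (Abar σ) (s, b) (u * s, u • b)).1 =
      -(3 * (u * (s ^ 2 * σ s))) + 3 * (u * s) * H.T b b - 2 * (u * H.T (H.sharp b) b) := by
  rw [AUop, HAmul_Abar_smul H hσ hu, HAmul_Abar_self H hσ, two_nsmul]
  simp only [Prod.fst_sub, Prod.fst_add, HAmul, T_sub_left, T_smul_left, T_smul_right,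
    H.T_add_left, hu]
  ring

theorem T_AUop_smul_snd (hσ : Function.Involutive σ) {u : K} (hu : σ u = -u) (s : K) (b : J) :
    H.T b (AUop (HAmul H) (Abar σ) (s, b) (u * s, u • b)).2 =
      3 * (u * H.T b b ^ 2) - 3 * (u * (s * σ s) * H.T b b)
        + 6 * (u * s * H.T b (H.sharp b)) - 12 * (u * H.T (H.sharp b) (H.sharp b)) := by
  rw [AUop, HAmul_Abar_smul H hσ hu, HAmul_Abar_self H hσ, two_nsmul]
  simp only [Prod.snd_sub, Prod.snd_add, HAmul, T_sub_right, H.T_add_right]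
  rw [H.T_cross_rotate _ b b, H.T_cross_rotate _ (u • b) b, H.cross_self, H.cross_comm (u • b),
    H.cross_smul_self]
  simp only [H.T_add_right, H.T_add_left, T_sub_right, T_sub_left, T_smul_left, T_smul_right,
    map_mul, map_neg, map_add, map_ofNat, hu, hσ _, H.T_conj]
  ring

end HAAlgebra

theorem stmt18_general {F : Type*} [Field F] (h2 : (2 : F) ≠ 0)
    {K : Type*} [CommRing K] [Algebra F K]
    (σ : K ≃ₐ[F] K)
    (hσσ : ∀ t : K, σ (σ t) = t)
    (hfix : ∀ t : K, σ t = t ↔ ∃ c : F, t = algebraMap F K c)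
    {J : Type*} [AddCommGroup J] [Module K J]
    (H : HermCubicNormStructure K (⇑σ) J)
    (u : K) (huskew : σ u = -u) :
    (∃ μ : F, algebraMap F K μ = u ^ 2) ∧
    ∀ (s : K) (b : J),
      HAmul H
        (Apsi (HAmul H) (Abar (⇑σ)) ((s, b) : K × J)
          (AUop (HAmul H) (Abar (⇑σ)) ((s, b) : K × J)
            (HAmul H ((u, 0) : K × J) ((s, b) : K × J))))
        ((u, 0) : K × J) =
      ((6 : K) * u ^ 2 *
        ((s * σ s - H.T b b) ^ 2 - 4 * H.T (H.sharp b) (H.sharp b) +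
          4 * (s * H.N b + σ (s * H.N b))),
        (0 : J)) := by
  refine ⟨?_, fun s b => ?_⟩
  · obtain ⟨μ, hμ⟩ := (hfix (u ^ 2)).mp (by rw [map_pow, huskew, neg_sq])
    exact ⟨μ, hμ.symm⟩
  have h2K : IsUnit (2 : K) :=
    map_ofNat (algebraMap F K) 2 ▸ (IsUnit.mk0 _ h2).map (algebraMap F K)
  rw [HAmul_mk_zero_left, Apsi_HAmul_Abar H hσσ, HAmul_mk_zero_left, smul_zero, Prod.mk.injEq]
  refine ⟨?_, rfl⟩
  rw [map_add, map_mul, hσσ, AUop_smul_fst H hσσ huskew, T_AUop_smul_snd H hσσ huskew]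
  simp only [map_mul, map_add, map_sub, map_neg, map_pow, map_ofNat, hσσ, huskew, H.T_conj,
    H.T_self_sharp h2K, H.T_sharp_self h2K]
  ring

/-- Proposition 4.10: the norm of `A(K)` is
`ν(s,b) = (Nr(s) − T(b,b))² − 4T(b♯,b♯) + 4Tr(s·N(b))`, in the sense that
`ψ(x, U_x(s₀x))·s₀ = 6μ·ν(s,b)·(1,0)` for every `x = (s,b)`, where `s₀ = (u,0)`
is skew and `μ = u² ∈ F`. -/
theorem stmt18 {F : Type*} [Field F] (h2 : (2 : F) ≠ 0) (h3 : (3 : F) ≠ 0)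
    {K : Type*} [CommRing K] [Algebra F K]
    (hdim : Module.finrank F K = 2)
    (hred : ∀ t : K, t * t = 0 → t = 0)
    (σ : K ≃ₐ[F] K)
    (hσσ : ∀ t : K, σ (σ t) = t)
    (hfix : ∀ t : K, σ t = t ↔ ∃ c : F, t = algebraMap F K c)
    {J : Type*} [AddCommGroup J] [Module K J]
    (H : HermCubicNormStructure K (⇑σ) J)
    (u : K) (hu : u ≠ 0) (huskew : σ u = -u) :
    (∃ μ : F, algebraMap F K μ = u ^ 2) ∧
    ∀ (s : K) (b : J),
      HAmul H
        (Apsi (HAmul H) (Abar (⇑σ)) ((s, b) : K × J)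
          (AUop (HAmul H) (Abar (⇑σ)) ((s, b) : K × J)
            (HAmul H ((u, 0) : K × J) ((s, b) : K × J))))
        ((u, 0) : K × J) =
      ((6 : K) * u ^ 2 *
        ((s * σ s - H.T b b) ^ 2 - 4 * H.T (H.sharp b) (H.sharp b) +
          4 * (s * H.N b + σ (s * H.N b))),
        (0 : J)) :=
  stmt18_general h2 σ hσσ hfix H u huskew
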